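/- Suppose L is generic and satisfies the triangle inequality. Then for any two vertices V and V′ of Γ(L), there is a path in Γ(L) of length at most 7 from V either to V′ or to the mirror image of V′. -/

import Mathlib

open Finset

/-- `I ⊆ [n]` is *short*: the sum of its lengths is less than that of its complement. -/
def ShortSet {n : ℕ} (L : Fin n → ℝ) (I : Finset (Fin n)) : Prop :=
  ∑ i ∈ I, L i < ∑ i ∈ Iᶜ, L i

/-- `I ⊆ [n]` is *long*: the sum of its lengths is greater than that of its complement. -/
def LongSet {n : ℕ} (L : Fin n → ℝ) (I : Finset (Fin n)) : Prop :=
  ∑ i ∈ Iᶜ, L i < ∑ i ∈ I, L i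

/-- The length vector `L` is *generic*. -/
def GenericVec {n : ℕ} (L : Fin n → ℝ) : Prop :=
  ∀ I : Finset (Fin n), ∑ i ∈ I, L i ≠ ∑ i ∈ Iᶜ, L i

/-- `L` satisfies the triangle inequality: every singleton is short. -/
def TriangleIneq {n : ℕ} (L : Fin n → ℝ) : Prop :=
  ∀ i : Fin n, ShortSet L {i}

/-- Ordered triples of subsets of `[n]`. -/
abbrev LTriple (n : ℕ) := Finset (Fin n) × Finset (Fin n) × Finset (Fin n)

/-- An ordered triple `(I, J, K)` representing a vertex of `Γ(L)`: three pairwise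
disjoint nonempty short sets whose union is `[n]`. -/
def IsVertex {n : ℕ} (L : Fin n → ℝ) (V : LTriple n) : Prop :=
  V.1.Nonempty ∧ V.2.1.Nonempty ∧ V.2.2.Nonempty ∧
  ShortSet L V.1 ∧ ShortSet L V.2.1 ∧ ShortSet L V.2.2 ∧
  Disjoint V.1 V.2.1 ∧ Disjoint V.1 V.2.2 ∧ Disjoint V.2.1 V.2.2 ∧
  V.1 ∪ V.2.1 ∪ V.2.2 = Finset.univ

/-- Cyclic rotation of an ordered triple. -/
def rotT {n : ℕ} (V : LTriple n) : LTriple n := (V.2.1, V.2.2, V.1)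

/-- Two ordered triples represent the same cyclically ordered partition
(`(I,J,K)`, `(J,K,I)` and `(K,I,J)` are identified). -/
def CyclEq {n : ℕ} (V W : LTriple n) : Prop :=
  W = V ∨ W = rotT V ∨ W = rotT (rotT V)

/-- The mirror image of the vertex `(I, J, K)` is the vertex `(J, I, K)`. -/
def mirrorT {n : ℕ} (V : LTriple n) : LTriple n := (V.2.1, V.1, V.2.2)

/-- The elementary move on representatives: shift a nonempty proper subset
`S ⊊ I` to the second part, provided `J ∪ S` stays short. -/
def MoveStep {n : ℕ} (L : Fin n → ℝ) (V W : LTriple n) : Prop :=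
  ∃ S : Finset (Fin n), S.Nonempty ∧ S ⊂ V.1 ∧ ShortSet L (V.2.1 ∪ S) ∧
    W = (V.1 \ S, V.2.1 ∪ S, V.2.2)

/-- Adjacency in `Γ(L)`: one of the two vertices has a representative from which an
elementary move leads to a representative of the other. -/
def GammaAdj {n : ℕ} (L : Fin n → ℝ) (V W : LTriple n) : Prop :=
  (∃ V' W' : LTriple n, CyclEq V V' ∧ MoveStep L V' W' ∧ CyclEq W W') ∨
  (∃ W' V' : LTriple n, CyclEq W W' ∧ MoveStep L W' V' ∧ CyclEq V V')

/-- There is a path of length `m` (i.e. with `m` consecutive edges) in `Γ(L)`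
from the vertex `V` to the vertex `W`. -/
def GammaPath {n : ℕ} (L : Fin n → ℝ) (m : ℕ) (V W : LTriple n) : Prop :=
  ∃ f : ℕ → LTriple n, CyclEq V (f 0) ∧ CyclEq W (f m) ∧
    (∀ i ≤ m, IsVertex L (f i)) ∧ ∀ i < m, GammaAdj L (f i) (f (i + 1))

/-!
Let `m` be an index of maximal length. Every vertex has a representative `(I, J, K)` with
`m ∈ I`, and at most two moves lead from it to `({m}, J ∪ S, K ∪ (I \ ({m} ∪ S)))`: the set
`S ⊆ I \ {m}` only has to make both new parts short, which asks `∑ S` to lie in a window of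
width `l_m`, and since no `l_t` exceeds `l_m` some subset sum lands in it.

Two vertices `(I, J, K)` and `(I, J', K')` sharing their first part are then close. If
`I ∪ (J ∩ J')` is long, the vertex `(I, J ∩ J', (I ∪ (J ∩ J'))ᶜ)` is within one move of both.
Otherwise `(I ∪ (J ∩ J'), J ∩ K', K)` and `(I ∪ (J ∩ J'), K', K ∩ J')` join `(I, J, K)` to the
mirror image `(I, K', J')` in three moves. Altogether `2 + 3 + 2 = 7`.
-/

namespace CyclEq

variable {n : ℕ} {U V W : LTriple n}

theorem refl (V : LTriple n) : CyclEq V V := Or.inl rfl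

theorem rot (V : LTriple n) : CyclEq V (rotT V) := Or.inr (Or.inl rfl)

theorem rot_rot (V : LTriple n) : CyclEq V (rotT (rotT V)) := Or.inr (Or.inr rfl)

theorem symm (h : CyclEq V W) : CyclEq W V := by
  rcases h with rfl | rfl | rfl
  exacts [refl _, rot_rot _, rot _]

theorem trans (h₁ : CyclEq U V) (h₂ : CyclEq V W) : CyclEq U W := by
  rcases h₁ with rfl | rfl | rfl <;> rcases h₂ with rfl | rfl | rfl
  all_goals first | exact refl _ | exact rot _ | exact rot_rot _

theorem mirror (h : CyclEq V W) : CyclEq (mirrorT V) (mirrorT W) := by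
  rcases h with rfl | rfl | rfl
  exacts [refl _, rot_rot _, rot _]

end CyclEq

namespace IsVertex

variable {n : ℕ} {L : Fin n → ℝ} {V W : LTriple n}

theorem rot (hV : IsVertex L V) : IsVertex L (rotT V) := by
  obtain ⟨h₁, h₂, h₃, s₁, s₂, s₃, d₁₂, d₁₃, d₂₃, hu⟩ := hV
  refine ⟨h₂, h₃, h₁, s₂, s₃, s₁, d₂₃, d₁₂.symm, d₁₃.symm, ?_⟩
  rw [← hu]; simp only [rotT]; ac_rfl

theorem of_cyclEq (hV : IsVertex L V) (h : CyclEq V W) : IsVertex L W := by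
  rcases h with rfl | rfl | rfl
  exacts [hV, hV.rot, hV.rot.rot]

theorem mirror (hV : IsVertex L V) : IsVertex L (mirrorT V) := by
  obtain ⟨h₁, h₂, h₃, s₁, s₂, s₃, d₁₂, d₁₃, d₂₃, hu⟩ := hV
  refine ⟨h₂, h₁, h₃, s₂, s₁, s₃, d₁₂.symm, d₂₃, d₁₃, ?_⟩
  rw [← hu]; simp only [mirrorT]; ac_rfl

end IsVertex

section ShortSets

variable {n : ℕ} {L : Fin n → ℝ} {X Y : Finset (Fin n)}

theorem shortSet_iff : ShortSet L X ↔ 2 * ∑ i ∈ X, L i < ∑ i, L i := by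
  rw [ShortSet, ← sum_add_sum_compl X L]; constructor <;> intro h <;> linarith

theorem longSet_iff_shortSet_compl : LongSet L X ↔ ShortSet L Xᶜ := by
  rw [LongSet, ShortSet, compl_compl]

theorem ShortSet.not_longSet (h : ShortSet L X) : ¬ LongSet L X := h.asymm

theorem GenericVec.shortSet_or_longSet (hgen : GenericVec L) (X : Finset (Fin n)) :
    ShortSet L X ∨ LongSet L X :=
  (hgen X).lt_or_gt

theorem ShortSet.subset (hL : ∀ i, 0 ≤ L i) (hY : ShortSet L Y) (hXY : X ⊆ Y) :
    ShortSet L X := by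
  rw [shortSet_iff] at hY ⊢
  have := sum_le_sum_of_subset_of_nonneg hXY fun i _ _ => hL i
  linarith

end ShortSets

section Vertices

variable {n : ℕ} {L : Fin n → ℝ} {I J K : Finset (Fin n)}

theorem IsVertex.mem_cases (hV : IsVertex L (I, J, K)) (x : Fin n) :
    (x ∈ I ∨ x ∈ J ∨ x ∈ K) ∧ (x ∈ I → x ∉ J ∧ x ∉ K) ∧ (x ∈ J → x ∉ K) := by
  obtain ⟨-, -, -, -, -, -, dIJ, dIK, dJK, hu⟩ := hV
  have hx : x ∈ I ∪ J ∪ K := hu ▸ mem_univ x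
  simp only [mem_union, or_assoc] at hx
  exact ⟨hx, fun h => ⟨disjoint_left.1 dIJ h, disjoint_left.1 dIK h⟩,
    fun h => disjoint_left.1 dJK h⟩

theorem IsVertex.compl_union (hV : IsVertex L (I, J, K)) : (I ∪ J)ᶜ = K := by
  obtain ⟨-, -, -, -, -, -, -, d₁₃, d₂₃, hu⟩ := hV
  rw [compl_eq_univ_sdiff, ← hu, union_sdiff_left, sdiff_eq_self_of_disjoint]
  exact disjoint_union_right.2 ⟨d₁₃.symm, d₂₃.symm⟩

theorem IsVertex.longSet_union (hV : IsVertex L (I, J, K)) : LongSet L (I ∪ J) := by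
  obtain ⟨-, -, -, -, -, hKs, -⟩ := id hV
  rwa [longSet_iff_shortSet_compl, hV.compl_union]

theorem isVertex_compl (hI : I.Nonempty) (hJ : J.Nonempty) (hIs : ShortSet L I)
    (hJs : ShortSet L J) (hIJ : Disjoint I J) (hlong : LongSet L (I ∪ J)) :
    IsVertex L (I, J, (I ∪ J)ᶜ) := by
  have hK : ShortSet L (I ∪ J)ᶜ := longSet_iff_shortSet_compl.1 hlong
  refine ⟨hI, hJ, ?_, hIs, hJs, hK, hIJ, ?_, ?_, union_compl _⟩
  · rw [nonempty_iff_ne_empty, Ne, compl_eq_empty_iff]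
    intro h
    have hsum := sum_union hIJ (f := L)
    rw [h] at hsum
    rw [shortSet_iff] at hIs hJs
    linarith
  · exact disjoint_compl_right.mono_right (compl_subset_compl.2 subset_union_left)
  · exact disjoint_compl_right.mono_right (compl_subset_compl.2 subset_union_right)

end Vertices

section Adjacency

variable {n : ℕ} {L : Fin n → ℝ} {V V' W W' : LTriple n}

theorem GammaAdj.symm (h : GammaAdj L V W) : GammaAdj L W V :=
  Or.symm h

theorem GammaAdj.congr (hV : CyclEq V V') (hW : CyclEq W W') (h : GammaAdj L V W) :
    GammaAdj L V' W' := by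
  rcases h with ⟨X, Y, hX, hXY, hY⟩ | ⟨Y, X, hY, hYX, hX⟩
  · exact Or.inl ⟨X, Y, hV.symm.trans hX, hXY, hW.symm.trans hY⟩
  · exact Or.inr ⟨Y, X, hW.symm.trans hY, hYX, hV.symm.trans hX⟩

theorem MoveStep.mirror (hV : IsVertex L V) (h : MoveStep L V W) :
    MoveStep L (mirrorT W) (mirrorT V) := by
  obtain ⟨I, J, K⟩ := V
  obtain ⟨S, hS, hSI, hJS, rfl⟩ := h
  obtain ⟨-, ⟨x, hx⟩, -, hIs, -, -, dIJ, -⟩ := hV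
  have hSJ : Disjoint S J := dIJ.mono_left hSI.subset
  refine ⟨S, hS, ?_, ?_, ?_⟩
  ·     exact ssubset_of_subset_of_ne subset_union_right fun h =>
      disjoint_left.1 hSJ (h ▸ mem_union_left S hx) hx
  · simpa [mirrorT, sdiff_union_of_subset hSI.subset] using hIs
  · simp [mirrorT, sdiff_union_of_subset hSI.subset, union_sdiff_cancel_right hSJ.symm]

theorem GammaAdj.mirror (hV : IsVertex L V) (hW : IsVertex L W) (h : GammaAdj L V W) :
    GammaAdj L (mirrorT V) (mirrorT W) := by
  rcases h with ⟨X, Y, hX, hXY, hY⟩ | ⟨Y, X, hY, hYX, hX⟩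
  · exact Or.inr ⟨_, _, hY.mirror, hXY.mirror (hV.of_cyclEq hX), hX.mirror⟩
  · exact Or.inl ⟨_, _, hX.mirror, hYX.mirror (hW.of_cyclEq hY), hY.mirror⟩

theorem gammaAdj_of_ssubset {I J K I' J' : Finset (Fin n)} (hV : IsVertex L (I, J, K))
    (hW : IsVertex L (I', J', K)) (h : I' ⊂ I) : GammaAdj L (I, J, K) (I', J', K) := by
  have hJ' : J' = J ∪ (I \ I') := by
    ext x
    have := hV.mem_cases x; have := hW.mem_cases x; have : x ∈ I' → x ∈ I := (h.subset ·)
    simp only [mem_union, mem_sdiff]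
    grind
  obtain ⟨hI', -, -, -, hJ's, -⟩ := hW
  refine Or.inl ⟨_, _, .refl _, ⟨I \ I', sdiff_nonempty.2 h.not_subset,
    sdiff_ssubset h.subset hI', hJ' ▸ hJ's, ?_⟩, .refl _⟩
  simp only [Finset.sdiff_sdiff_eq_self h.subset, ← hJ']

end Adjacency

namespace GammaPath

variable {n : ℕ} {L : Fin n → ℝ} {U V V' W W' : LTriple n} {a b m : ℕ}

theorem refl (hV : IsVertex L V) : GammaPath L 0 V V :=
  ⟨fun _ => V, .refl V, .refl V, fun _ _ => hV, fun _ h => absurd h (Nat.not_lt_zero _)⟩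

theorem of_adj (hV : IsVertex L V) (hW : IsVertex L W) (h : GammaAdj L V W) :
    GammaPath L 1 V W := by
  refine ⟨fun i => if i = 0 then V else W, .refl V, .refl W, fun i _ => ?_, fun i hi => ?_⟩
  · dsimp only
    split_ifs <;> assumption
  · obtain rfl : i = 0 := by omega
    simpa using h

theorem congr (hV : CyclEq V V') (hW : CyclEq W W') (h : GammaPath L m V' W') :
    GammaPath L m V W := by
  obtain ⟨f, h₀, hm, hf, hadj⟩ := h
  exact ⟨f, hV.trans h₀, hW.trans hm, hf, hadj⟩

theorem symm (h : GammaPath L m V W) : GammaPath L m W V := by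
  obtain ⟨f, h₀, hm, hf, hadj⟩ := h
  refine ⟨fun i => f (m - i), by simpa using hm, by simpa using h₀,
    fun i _ => hf _ (Nat.sub_le m i), fun i hi => ?_⟩
  have := (hadj (m - (i + 1)) (by omega)).symm
  rwa [show m - (i + 1) + 1 = m - i by omega] at this

theorem trans (h₁ : GammaPath L a U V) (h₂ : GammaPath L b V W) :
    GammaPath L (a + b) U W := by
  obtain ⟨f, f₀, fa, hf, fadj⟩ := h₁
  obtain ⟨g, g₀, gb, hg, gadj⟩ := h₂
  have hfg : CyclEq (f a) (g 0) := fa.symm.trans g₀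
  refine ⟨fun i => if i < a then f i else g (i - a), ?_, by simpa using gb, fun i hi => ?_,
    fun i hi => ?_⟩
  · rcases Nat.eq_zero_or_pos a with rfl | ha
    · simpa using f₀.trans hfg
    · simpa [ha] using f₀
  · dsimp only
    split_ifs with h
    exacts [hf i h.le, hg _ (by omega)]
  · by_cases h : i + 1 < a
    · simpa [h, show i < a by omega] using fadj i (by omega)
    by_cases h' : i < a
    · obtain rfl : a = i + 1 := by omega
      simpa [h, h'] using (fadj i h').congr (.refl _) hfg
    · simpa [h, h', show i + 1 - a = i - a + 1 by omega] using gadj (i - a) (by omega)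

theorem mirror (h : GammaPath L m V W) : GammaPath L m (mirrorT V) (mirrorT W) := by
  obtain ⟨f, h₀, hm, hf, hadj⟩ := h
  exact ⟨fun i => mirrorT (f i), h₀.mirror, hm.mirror, fun i hi => (hf i hi).mirror,
    fun i hi => (hadj i hi).mirror (hf i hi.le) (hf (i + 1) hi)⟩

end GammaPath

def ReachWithin {n : ℕ} (L : Fin n → ℝ) (k : ℕ) (V W : LTriple n) : Prop :=
  ∃ m ≤ k, GammaPath L m V W

namespace ReachWithin

variable {n : ℕ} {L : Fin n → ℝ} {U V V' W W' : LTriple n} {a b k : ℕ}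

theorem mono (h : ReachWithin L a V W) (hab : a ≤ b) : ReachWithin L b V W :=
  let ⟨m, hm, p⟩ := h; ⟨m, hm.trans hab, p⟩

theorem congr (hV : CyclEq V V') (hW : CyclEq W W') (h : ReachWithin L k V' W') :
    ReachWithin L k V W :=
  let ⟨m, hm, p⟩ := h; ⟨m, hm, p.congr hV hW⟩

theorem symm (h : ReachWithin L k V W) : ReachWithin L k W V :=
  let ⟨m, hm, p⟩ := h; ⟨m, hm, p.symm⟩

theorem trans (h₁ : ReachWithin L a U V) (h₂ : ReachWithin L b V W) :
    ReachWithin L (a + b) U W :=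
  let ⟨m₁, hm₁, p₁⟩ := h₁; let ⟨m₂, hm₂, p₂⟩ := h₂; ⟨m₁ + m₂, by omega, p₁.trans p₂⟩

theorem mirror (h : ReachWithin L k V W) : ReachWithin L k (mirrorT V) (mirrorT W) :=
  let ⟨m, hm, p⟩ := h; ⟨m, hm, p.mirror⟩

end ReachWithin

section NestedParts

variable {n : ℕ} {L : Fin n → ℝ} {I J K I' J' K' : Finset (Fin n)}

theorem reachWithin_one_of_fst_subset (hV : IsVertex L (I, J, K)) (hW : IsVertex L (I', J', K))
    (h : I' ⊆ I) : ReachWithin L 1 (I, J, K) (I', J', K) := by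
  obtain h | rfl := h.ssubset_or_eq
  · exact ⟨1, le_rfl, .of_adj hV hW (gammaAdj_of_ssubset hV hW h)⟩
  · have hV' : IsVertex L (K, I', J) := hV.rot.rot
    have hW' : IsVertex L (K, I', J') := hW.rot.rot
    obtain rfl : J = J' := hV'.compl_union.symm.trans hW'.compl_union
    exact ⟨0, zero_le_one, .refl hV⟩

theorem reachWithin_one_of_snd_subset (hV : IsVertex L (I, J, K)) (hW : IsVertex L (I, J', K'))
    (h : J' ⊆ J) : ReachWithin L 1 (I, J, K) (I, J', K') :=
  (reachWithin_one_of_fst_subset (K := I) hV.rot hW.rot h).congr (.rot _) (.rot _)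

theorem reachWithin_one_of_thd_subset (hV : IsVertex L (I, J, K)) (hW : IsVertex L (I', J, K'))
    (h : K' ⊆ K) : ReachWithin L 1 (I, J, K) (I', J, K') :=
  (reachWithin_one_of_fst_subset (K := J) hV.rot.rot hW.rot.rot h).congr (.rot_rot _)
    (.rot_rot _)

end NestedParts

theorem Finset.exists_subset_sum_mem_Ico {ι α : Type*} [DecidableEq ι] [AddCommGroup α]
    [LinearOrder α] [IsOrderedAddMonoid α] {f : ι → α} {a b : α} {T : Finset ι} (hb : 0 < b)
    (hstep : ∀ t ∈ T, f t ≤ b - a) (ha : a ≤ ∑ t ∈ T, f t) :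
    ∃ P ⊆ T, a ≤ ∑ t ∈ P, f t ∧ ∑ t ∈ P, f t < b := by
  suffices ∑ t ∈ T, f t < a ∨ ∃ P ⊆ T, a ≤ ∑ t ∈ P, f t ∧ ∑ t ∈ P, f t < b from
    this.resolve_left ha.not_gt
  clear ha
  induction T using Finset.induction_on with
  | empty => simpa [hb] using lt_or_ge 0 a
  | insert t T ht ih =>
    obtain h | ⟨P, hPT, hP⟩ := ih fun s hs => hstep s (mem_insert_of_mem hs)
    · rw [sum_insert ht]
      refine (lt_or_ge _ a).imp id fun ha' => ⟨insert t T, subset_rfl, by rwa [sum_insert ht], ?_⟩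
      rw [sum_insert ht]
      calc f t + ∑ s ∈ T, f s < b - a + a :=
            add_lt_add_of_le_of_lt (hstep t (mem_insert_self t T)) h
        _ = b := sub_add_cancel b a
    · exact Or.inr ⟨P, hPT.trans (subset_insert t T), hP⟩

section Singleton

variable {n : ℕ} {L : Fin n → ℝ} {I J K S : Finset (Fin n)} {m : Fin n}

theorem IsVertex.move (hL : ∀ i, 0 ≤ L i) (hV : IsVertex L (I, J, K)) (hSI : S ⊆ I)
    (hS : (I \ S).Nonempty) (hJS : ShortSet L (J ∪ S)) : IsVertex L (I \ S, J ∪ S, K) := by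
  obtain ⟨-, hJ, hK, hIs, -, hKs, dIJ, dIK, dJK, hu⟩ := hV
  refine ⟨hS, hJ.mono subset_union_left, hK, hIs.subset hL sdiff_subset, hJS, hKs,
    disjoint_union_right.2 ⟨dIJ.mono_left sdiff_subset, sdiff_disjoint⟩,
    dIK.mono_left sdiff_subset, disjoint_union_left.2 ⟨dJK, dIK.mono_left hSI⟩, ?_⟩
  rw [← hu, union_comm J, ← union_assoc, sdiff_union_of_subset hSI]

theorem exists_shortSet_union_longSet (hgen : GenericVec L) (hm : ∀ i, L i ≤ L m)
    (hV : IsVertex L (I, J, K)) (hmI : m ∈ I) :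
    ∃ S ⊆ I.erase m, ShortSet L (J ∪ S) ∧ LongSet L ({m} ∪ (J ∪ S)) := by
  obtain ⟨-, -, -, -, hJs, hKs, dIJ, dIK, dJK, hu⟩ := hV
  have hsum : ∑ i, L i = L m + ∑ i ∈ I.erase m, L i + ∑ i ∈ J, L i + ∑ i ∈ K, L i := by
    rw [← hu, sum_union (disjoint_union_left.2 ⟨dIK, dJK⟩), sum_union dIJ,
      add_sum_erase I L hmI]
  rw [shortSet_iff] at hJs hKs
  -- the window `[a, b)` for `∑ S` has width `L m`, which no step of a subset sum exceeds
  obtain ⟨S, hS, hlo, hhi⟩ := exists_subset_sum_mem_Ico (f := L) (T := I.erase m)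
    (a := ∑ i ∈ I.erase m, L i + ∑ i ∈ K, L i - (∑ i, L i) / 2)
    (b := (∑ i, L i) / 2 - ∑ i ∈ J, L i) (by linarith)
    (fun t _ => by linarith [hm t]) (by linarith)
  have hmS : m ∉ S := fun h => notMem_erase m I (hS h)
  have hJS : Disjoint J S := (dIJ.mono_left (hS.trans (erase_subset m I))).symm
  have hmJS : m ∉ J ∪ S := by
    simpa [hmS] using disjoint_left.1 dIJ hmI
  have hsumJS : ∑ i ∈ J ∪ S, L i = ∑ i ∈ J, L i + ∑ i ∈ S, L i := sum_union hJS
  refine ⟨S, hS, shortSet_iff.2 (by linarith), ?_⟩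
  refine (hgen.shortSet_or_longSet _).resolve_left fun h => ?_
  rw [shortSet_iff, sum_union (disjoint_singleton_left.2 hmJS), sum_singleton, hsumJS] at h
  linarith

theorem exists_reachWithin_two_singleton (hL : ∀ i, 0 ≤ L i) (hgen : GenericVec L)
    (htri : TriangleIneq L) (hm : ∀ i, L i ≤ L m) (hV : IsVertex L (I, J, K)) (hmI : m ∈ I) :
    ∃ J' K', IsVertex L ({m}, J', K') ∧ ReachWithin L 2 (I, J, K) ({m}, J', K') := by
  obtain ⟨S, hS, hJS, hlong⟩ := exists_shortSet_union_longSet hgen hm hV hmI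
  obtain ⟨-, hJ, -, -, -, -, dIJ, dIK, dJK, -⟩ := id hV
  have hSI : S ⊆ I := hS.trans (erase_subset m I)
  have hmS : m ∉ S := fun h => notMem_erase m I (hS h)
  have hmJS : m ∉ J ∪ S := by
    simpa [hmS] using disjoint_left.1 dIJ hmI
  have hV₁ : IsVertex L (I \ S, J ∪ S, K) :=
    hV.move hL hSI ⟨m, mem_sdiff.2 ⟨hmI, hmS⟩⟩ hJS
  have hV₂ : IsVertex L ({m}, J ∪ S, ({m} ∪ (J ∪ S))ᶜ) :=
    isVertex_compl (singleton_nonempty m) (hJ.mono subset_union_left) (htri m) hJS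
      (disjoint_singleton_left.2 hmJS) hlong
  have hK : K ⊆ ({m} ∪ (J ∪ S))ᶜ := by
    refine subset_compl_iff_disjoint_right.2 (disjoint_union_right.2 ⟨?_, ?_⟩)
    · exact disjoint_singleton_right.2 (disjoint_left.1 dIK hmI)
    · exact disjoint_union_right.2 ⟨dJK.symm, dIK.symm.mono_right hSI⟩
  exact ⟨_, _, hV₂, (reachWithin_one_of_fst_subset hV hV₁ sdiff_subset).trans
    (reachWithin_one_of_thd_subset hV₂ hV₁ hK).symm⟩

end Singleton

section SharedFirstPart

variable {n : ℕ} {L : Fin n → ℝ} {I J K J' K' : Finset (Fin n)}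

theorem reachWithin_two_of_longSet (hL : ∀ i, 0 ≤ L i) (hV : IsVertex L (I, J, K))
    (hW : IsVertex L (I, J', K')) (hlong : LongSet L (I ∪ (J ∩ J'))) :
    ReachWithin L 2 (I, J, K) (I, J', K') := by
  obtain ⟨hI, -, -, hIs, hJs, -, dIJ, -⟩ := id hV
  have hA : (J ∩ J').Nonempty := by
    refine nonempty_iff_ne_empty.2 fun h => hIs.not_longSet ?_
    rwa [h, union_empty] at hlong
  have hX : IsVertex L (I, J ∩ J', (I ∪ (J ∩ J'))ᶜ) :=
    isVertex_compl hI hA hIs (hJs.subset hL inter_subset_left)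
      (dIJ.mono_right inter_subset_left) hlong
  exact (reachWithin_one_of_snd_subset hV hX inter_subset_left).trans
    (reachWithin_one_of_snd_subset hW hX inter_subset_right).symm

theorem reachWithin_three_of_shortSet (hL : ∀ i, 0 ≤ L i) (hV : IsVertex L (I, J, K))
    (hW : IsVertex L (I, J', K')) (hA : ShortSet L (I ∪ (J ∩ J'))) :
    ReachWithin L 3 (I, J, K) (I, K', J') := by
  obtain ⟨hI, -, hK, -, hJs, hKs, -⟩ := id hV
  obtain ⟨-, -, hK', -, -, hK's, -⟩ := id hW
  have hBne : (J ∩ K').Nonempty := by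
    refine nonempty_iff_ne_empty.2 fun h => hA.not_longSet ?_
    convert hV.longSet_union using 2
    ext x
    have := hV.mem_cases x; have := hW.mem_cases x; have := eq_empty_iff_forall_notMem.1 h x
    grind
  have hCne : (K ∩ J').Nonempty := by
    refine nonempty_iff_ne_empty.2 fun h => hA.not_longSet ?_
    convert hW.longSet_union using 2
    ext x
    have := hV.mem_cases x; have := hW.mem_cases x; have := eq_empty_iff_forall_notMem.1 h x
    grind
  have hX₁ : IsVertex L (I ∪ (J ∩ J'), J ∩ K', K) := by
    refine ⟨hI.mono subset_union_left, hBne, hK, hA, hJs.subset hL inter_subset_left, hKs,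
      ?_, ?_, ?_, ?_⟩
    all_goals simp only [disjoint_left, eq_univ_iff_forall, mem_union, mem_inter]
    all_goals intro x; have := hV.mem_cases x; have := hW.mem_cases x; grind
  have hX₂ : IsVertex L (I ∪ (J ∩ J'), K', K ∩ J') := by
    refine ⟨hI.mono subset_union_left, hK', hCne, hA, hK's,
      hKs.subset hL inter_subset_left, ?_, ?_, ?_, ?_⟩
    all_goals simp only [disjoint_left, eq_univ_iff_forall, mem_union, mem_inter]
    all_goals intro x; have := hV.mem_cases x; have := hW.mem_cases x; grind
  have hY : IsVertex L (I, K', J') := hW.mirror.rot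
  exact ((reachWithin_one_of_fst_subset hX₁ hV subset_union_left).symm.trans
    (reachWithin_one_of_snd_subset hX₂ hX₁ inter_subset_right).symm).trans
    (reachWithin_one_of_thd_subset hY hX₂ inter_subset_right).symm

theorem reachWithin_three_or_mirror (hL : ∀ i, 0 ≤ L i) (hgen : GenericVec L)
    (hV : IsVertex L (I, J, K)) (hW : IsVertex L (I, J', K')) :
    ReachWithin L 3 (I, J, K) (I, J', K') ∨ ReachWithin L 3 (I, J, K) (I, K', J') :=
  (hgen.shortSet_or_longSet (I ∪ (J ∩ J'))).symm.imp
    (fun h => (reachWithin_two_of_longSet hL hV hW h).mono (by norm_num))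
    (reachWithin_three_of_shortSet hL hV hW)

end SharedFirstPart

theorem IsVertex.exists_cyclEq_mem_fst {n : ℕ} {L : Fin n → ℝ} {V : LTriple n}
    (hV : IsVertex L V) (m : Fin n) : ∃ I J K, CyclEq V (I, J, K) ∧ m ∈ I := by
  obtain ⟨I, J, K⟩ := V
  rcases (hV.mem_cases m).1 with h | h | h
  exacts [⟨I, J, K, .refl _, h⟩, ⟨J, K, I, .rot _, h⟩, ⟨K, I, J, .rot_rot _, h⟩]

theorem path_to_target_or_mirror_general (n : ℕ) (L : Fin n → ℝ)
    (hpos : ∀ i, 0 < L i) (hgen : GenericVec L) (htri : TriangleIneq L) :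
    ∀ V W : LTriple n, IsVertex L V → IsVertex L W →
      ∃ m ≤ 7, GammaPath L m V W ∨ GammaPath L m V (mirrorT W) := by
  intro V W hV hW
  suffices ReachWithin L 7 V W ∨ ReachWithin L 7 V (mirrorT W) by
    rcases this with ⟨k, hk, p⟩ | ⟨k, hk, p⟩
    exacts [⟨k, hk, .inl p⟩, ⟨k, hk, .inr p⟩]
  have hL : ∀ i, 0 ≤ L i := fun i => (hpos i).le
  obtain ⟨m, -, hm⟩ := exists_max_image univ L (hV.1.mono (subset_univ _))
  obtain ⟨I, J, K, hVI, hmI⟩ := hV.exists_cyclEq_mem_fst m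
  obtain ⟨I', J', K', hWI, hmI'⟩ := hW.exists_cyclEq_mem_fst m
  obtain ⟨J₁, K₁, hV₁, hVV₁⟩ := exists_reachWithin_two_singleton hL hgen htri
    (fun i => hm i (mem_univ i)) (hV.of_cyclEq hVI) hmI
  obtain ⟨J₂, K₂, hW₂, hWW₂⟩ := exists_reachWithin_two_singleton hL hgen htri
    (fun i => hm i (mem_univ i)) (hW.of_cyclEq hWI) hmI'
  replace hVV₁ := hVV₁.congr hVI (.refl _)
  replace hWW₂ := hWW₂.congr hWI (.refl _)
  rcases reachWithin_three_or_mirror hL hgen hV₁ hW₂ with h | h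
  · exact .inl ((hVV₁.trans h).trans hWW₂.symm)
  · exact .inr ((hVV₁.trans h).trans (hWW₂.mirror.congr (.refl _) (.rot_rot _)).symm)

/-- If `L` is generic and satisfies the triangle inequality, then for
any two vertices `V`, `V'` of `Γ(L)` there is a path of length at most 7 from `V`
either to `V'` or to the mirror image of `V'`. -/
theorem path_to_target_or_mirror (n : ℕ) (hn : 3 ≤ n) (L : Fin n → ℝ)
    (hpos : ∀ i, 0 < L i) (hgen : GenericVec L) (htri : TriangleIneq L) :
    ∀ V W : LTriple n, IsVertex L V → IsVertex L W →
      ∃ m ≤ 7, GammaPath L m V W ∨ GammaPath L m V (mirrorT W) :=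
  path_to_target_or_mirror_general n L hpos hgen htri
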